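/- Let h : R^m → R^n, and suppose for every pair of states x₁, x₂, there exist matrices H^local(x₁) (the Jacobian of h at x₁) and H^true(x₁,x₂) with h(x₂) − h(x₁) = H^true(x₁,x₂)(x₂ − x₁), such that: (i) every w in the range of every H^local satisfies C‖w_K‖₁ ≤ ‖w_{K̄}‖₁ with C > 1, where K is the support of the error vector e; (ii) with σ¹_min(A) := min{‖Az‖₁ : ‖z‖₁ = 1} and σ¹_max(A) := max{‖Az‖₁ : ‖z‖₁ = 1}, one has (2(C+1)/(C−1))·σ¹_max(H^true − H^local)/σ¹_min(H^local) ≤ β < 1 for all pairs of states. Then, with y = h(x) + e (no additive noise, ε = 0), the iteration x^{j+1} = x^j + Δx^{j+1}, where Δx^{j+1} minimizes ‖(y − h(x^j)) − H^local(x^j)·Δx‖₁ over Δx, satisfies ‖x − x^{j+1}‖₁ ≤ β‖x − x^j‖₁ for all j, hence x^j → x regardless of the initial point x⁰. -/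

import Mathlib

open Finset
noncomputable section
open scoped Classical

def l1 {n : ℕ} (w : Fin n → ℝ) : ℝ := ∑ i, |w i|
def restr {n : ℕ} (w : Fin n → ℝ) (K : Finset (Fin n)) : Fin n → ℝ := fun i => if i ∈ K then w i else 0

/-- smallest ℓ¹ gain of a matrix -/
def s1min {n m : ℕ} (A : Matrix (Fin n) (Fin m) ℝ) : ℝ :=
  sInf {r : ℝ | ∃ z : Fin m → ℝ, l1 z = 1 ∧ r = l1 (A.mulVec z)}

/-- induced ℓ¹→ℓ¹ operator norm -/
def s1max {n m : ℕ} (A : Matrix (Fin n) (Fin m) ℝ) : ℝ :=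
  sSup {r : ℝ | ∃ z : Fin m → ℝ, l1 z = 1 ∧ r = l1 (A.mulVec z)}

/-!
Write `r = x - xʲ`, `A = H^local(xʲ)` and `D = H^true(xʲ, x) - A`. The mean value relation turns the
residual into `y - h(xʲ) = A r + D r + e`, so comparing the minimiser `Δxʲ⁺¹` with the candidate
`Δ = r` gives `‖(D r + e) + w‖₁ ≤ ‖D r + e‖₁` for `w = A (r - Δxʲ⁺¹)`. As `e` lives on `K`, this
forces `‖w_K̄‖₁ - ‖w_K‖₁ ≤ 2‖D r‖₁`, and together with the balance condition `C‖w_K‖₁ ≤ ‖w_K̄‖₁`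
it yields `(C - 1)‖w‖₁ ≤ 2(C + 1)‖D r‖₁`. Bounding `‖w‖₁ ≥ σ¹_min(A)‖x - xʲ⁺¹‖₁` and
`‖D r‖₁ ≤ σ¹_max(D)‖r‖₁` gives the contraction by `β`, hence geometric convergence.
-/

open Finset Matrix Filter Topology

section L1Norm

variable {n : ℕ}

lemma l1_nonneg (w : Fin n → ℝ) : 0 ≤ l1 w :=
  sum_nonneg fun _ _ => abs_nonneg _

lemma l1_eq_zero_iff {w : Fin n → ℝ} : l1 w = 0 ↔ w = 0 := by
  simp [l1, sum_eq_zero_iff_of_nonneg, funext_iff]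

lemma l1_smul (c : ℝ) (w : Fin n → ℝ) : l1 (c • w) = |c| * l1 w := by
  simp [l1, abs_mul, mul_sum]

lemma l1_restr (w : Fin n → ℝ) (K : Finset (Fin n)) : l1 (restr w K) = ∑ i ∈ K, |w i| := by
  simp only [l1, restr, apply_ite abs, abs_zero, sum_ite_mem, univ_inter]

lemma l1_restr_add_l1_restr_compl (w : Fin n → ℝ) (K : Finset (Fin n)) :
    l1 (restr w K) + l1 (restr w Kᶜ) = l1 w := by
  rw [l1_restr, l1_restr]
  exact sum_add_sum_compl K _

lemma l1_restr_le (w : Fin n → ℝ) (K : Finset (Fin n)) : l1 (restr w K) ≤ l1 w := by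
  linarith [l1_restr_add_l1_restr_compl w K, l1_nonneg (restr w Kᶜ)]

lemma restr_compl_add_of_forall_notMem {g e : Fin n → ℝ} {K : Finset (Fin n)}
    (he : ∀ i, i ∉ K → e i = 0) : restr (g + e) Kᶜ = restr g Kᶜ := by
  funext i
  by_cases hi : i ∈ K <;> simp [restr, hi, he]

lemma l1_restr_compl_sub_l1_restr_le {f w : Fin n → ℝ} (K : Finset (Fin n))
    (h : l1 (f + w) ≤ l1 f) :
    l1 (restr w Kᶜ) - l1 (restr w K) ≤ 2 * l1 (restr f Kᶜ) := by
  have hK : ∑ i ∈ K, (|f i| - |w i|) ≤ ∑ i ∈ K, |f i + w i| :=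
    sum_le_sum fun i _ => abs_sub_abs_le_abs_add _ _
  have hKc : ∑ i ∈ Kᶜ, (|w i| - |f i|) ≤ ∑ i ∈ Kᶜ, |f i + w i| :=
    sum_le_sum fun i _ => by simpa [add_comm] using abs_sub_abs_le_abs_add (w i) (f i)
  rw [← l1_restr_add_l1_restr_compl f K, ← l1_restr_add_l1_restr_compl (f + w) K] at h
  simp only [l1_restr, Pi.add_apply, sum_sub_distrib] at *
  linarith

lemma sub_one_mul_l1_le_of_balanced {w : Fin n → ℝ} {K : Finset (Fin n)} {C G : ℝ}
    (hC : -1 ≤ C) (hbal : C * l1 (restr w K) ≤ l1 (restr w Kᶜ))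
    (hgap : l1 (restr w Kᶜ) - l1 (restr w K) ≤ 2 * G) :
    (C - 1) * l1 w ≤ 2 * (C + 1) * G := by
  rw [← l1_restr_add_l1_restr_compl w K]
  nlinarith [mul_le_mul_of_nonneg_left hgap (by linarith : 0 ≤ C + 1)]

end L1Norm

section Gains

variable {m n : ℕ}

-- `s1min A` and `s1max A` are, by definition, the `sInf` and `sSup` of this set.
def l1Gains (A : Matrix (Fin n) (Fin m) ℝ) : Set ℝ :=
  {r : ℝ | ∃ z : Fin m → ℝ, l1 z = 1 ∧ r = l1 (A *ᵥ z)}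

lemma nonneg_of_mem_l1Gains {A : Matrix (Fin n) (Fin m) ℝ} {r : ℝ} (hr : r ∈ l1Gains A) :
    0 ≤ r := by
  obtain ⟨z, -, rfl⟩ := hr
  exact l1_nonneg _

lemma s1min_nonneg (A : Matrix (Fin n) (Fin m) ℝ) : 0 ≤ s1min A :=
  Real.sInf_nonneg fun _ => nonneg_of_mem_l1Gains

lemma s1max_nonneg (A : Matrix (Fin n) (Fin m) ℝ) : 0 ≤ s1max A :=
  Real.sSup_nonneg fun _ => nonneg_of_mem_l1Gains

lemma l1_mulVec_le (A : Matrix (Fin n) (Fin m) ℝ) (z : Fin m → ℝ) :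
    l1 (A *ᵥ z) ≤ (∑ i, ∑ j, |A i j|) * l1 z := by
  have hz : ∀ j, |z j| ≤ l1 z := fun j =>
    single_le_sum (f := fun j => |z j|) (fun _ _ => abs_nonneg _) (mem_univ j)
  calc l1 (A *ᵥ z) = ∑ i, |∑ j, A i j * z j| := rfl
    _ ≤ ∑ i, ∑ j, |A i j| * |z j| :=
      sum_le_sum fun i _ => (abs_sum_le_sum_abs _ _).trans_eq (by simp only [abs_mul])
    _ ≤ ∑ i, ∑ j, |A i j| * l1 z :=
      sum_le_sum fun i _ => sum_le_sum fun j _ => mul_le_mul_of_nonneg_left (hz j) (abs_nonneg _)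
    _ = (∑ i, ∑ j, |A i j|) * l1 z := by simp only [sum_mul]

lemma bddAbove_l1Gains (A : Matrix (Fin n) (Fin m) ℝ) : BddAbove (l1Gains A) := by
  refine ⟨∑ i, ∑ j, |A i j|, ?_⟩
  rintro r ⟨z, hz, rfl⟩
  simpa [hz] using l1_mulVec_le A z

lemma l1_mulVec_div_mem_l1Gains (A : Matrix (Fin n) (Fin m) ℝ) {z : Fin m → ℝ}
    (hz : 0 < l1 z) : l1 (A *ᵥ z) / l1 z ∈ l1Gains A := by
  refine ⟨(l1 z)⁻¹ • z, ?_, ?_⟩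
  · rw [l1_smul, abs_inv, abs_of_pos hz, inv_mul_cancel₀ hz.ne']
  · rw [mulVec_smul, l1_smul, abs_inv, abs_of_pos hz, inv_mul_eq_div]

lemma l1_mulVec_le_s1max_mul (A : Matrix (Fin n) (Fin m) ℝ) (z : Fin m → ℝ) :
    l1 (A *ᵥ z) ≤ s1max A * l1 z := by
  rcases (l1_nonneg z).eq_or_lt with hz | hz
  · simp [l1_eq_zero_iff.1 hz.symm, l1]
  · rw [← div_le_iff₀ hz]
    exact le_csSup (bddAbove_l1Gains A) (l1_mulVec_div_mem_l1Gains A hz)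

lemma s1min_mul_le_l1_mulVec (A : Matrix (Fin n) (Fin m) ℝ) (z : Fin m → ℝ) :
    s1min A * l1 z ≤ l1 (A *ᵥ z) := by
  rcases (l1_nonneg z).eq_or_lt with hz | hz
  · simp [← hz, l1_nonneg]
  · rw [← le_div_iff₀ hz]
    exact csInf_le ⟨0, fun _ => nonneg_of_mem_l1Gains⟩ (l1_mulVec_div_mem_l1Gains A hz)

end Gains

section Recovery

variable {m n : ℕ} {A D : Matrix (Fin n) (Fin m) ℝ} {K : Finset (Fin n)} {C : ℝ}
  {b g e : Fin n → ℝ} {r d : Fin m → ℝ}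

lemma sub_one_mul_l1_mulVec_sub_le (hC : -1 ≤ C)
    (hbal : ∀ u, C * l1 (restr (A *ᵥ u) K) ≤ l1 (restr (A *ᵥ u) Kᶜ))
    (he : ∀ i, i ∉ K → e i = 0) (hb : b = A *ᵥ r + g + e)
    (hd : ∀ Δ, l1 (b - A *ᵥ d) ≤ l1 (b - A *ᵥ Δ)) :
    (C - 1) * l1 (A *ᵥ (r - d)) ≤ 2 * (C + 1) * l1 g := by
  have hopt : l1 ((g + e) + A *ᵥ (r - d)) ≤ l1 (g + e) := by
    convert hd r using 2 <;> simp only [hb, mulVec_sub] <;> abel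
  have hgap := l1_restr_compl_sub_l1_restr_le K hopt
  rw [restr_compl_add_of_forall_notMem he] at hgap
  exact sub_one_mul_l1_le_of_balanced hC (hbal _)
    (hgap.trans (by linarith [l1_restr_le g Kᶜ]))

lemma l1_sub_le_of_l1_minimizer (hC : 1 < C)
    (hbal : ∀ u, C * l1 (restr (A *ᵥ u) K) ≤ l1 (restr (A *ᵥ u) Kᶜ))
    (he : ∀ i, i ∉ K → e i = 0) (hb : b = A *ᵥ r + D *ᵥ r + e)
    (hd : ∀ Δ, l1 (b - A *ᵥ d) ≤ l1 (b - A *ᵥ Δ)) (hA : 0 < s1min A) :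
    l1 (r - d) ≤ 2 * (C + 1) / (C - 1) * (s1max D / s1min A) * l1 r := by
  have hw := sub_one_mul_l1_mulVec_sub_le (by linarith) hbal he hb hd
  have hC' : 0 < C - 1 := sub_pos.2 hC
  calc l1 (r - d) ≤ l1 (A *ᵥ (r - d)) / s1min A := by
        rw [le_div_iff₀ hA, mul_comm]
        exact s1min_mul_le_l1_mulVec A _
    _ ≤ 2 * (C + 1) / (C - 1) * l1 (D *ᵥ r) / s1min A := by
        gcongr
        rw [div_mul_eq_mul_div, le_div_iff₀ hC', mul_comm]
        exact hw
    _ ≤ 2 * (C + 1) / (C - 1) * (s1max D * l1 r) / s1min A := by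
        gcongr
        exact l1_mulVec_le_s1max_mul D r
    _ = 2 * (C + 1) / (C - 1) * (s1max D / s1min A) * l1 r := by ring

end Recovery

lemma tendsto_zero_of_le_mul_of_lt_one {u : ℕ → ℝ} {β : ℝ} (hu : ∀ j, 0 ≤ u j)
    (hβ0 : 0 ≤ β) (hβ : β < 1) (h : ∀ j, u (j + 1) ≤ β * u j) :
    Tendsto u atTop (𝓝 0) := by
  refine squeeze_zero hu (fun j => le_geom hβ0 j fun k _ => h k) ?_
  simpa using (tendsto_pow_atTop_nhds_zero_of_lt_one hβ0 hβ).mul_const (u 0)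

theorem stmt11 {m n : ℕ} (h : (Fin m → ℝ) → (Fin n → ℝ))
    (x : Fin m → ℝ) (e y : Fin n → ℝ) (K : Finset (Fin n)) (C β : ℝ)
    (Hloc : (Fin m → ℝ) → Matrix (Fin n) (Fin m) ℝ)
    (Htrue : (Fin m → ℝ) → (Fin m → ℝ) → Matrix (Fin n) (Fin m) ℝ)
    (heK : ∀ i, i ∉ K → e i = 0)
    (hy : y = h x + e)
    (hC : 1 < C) (hβ : β < 1)
    (hfull : ∀ x1 : Fin m → ℝ, 0 < s1min (Hloc x1))
    (hmvt : ∀ x1 x2 : Fin m → ℝ,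
      h x2 - h x1 = (Htrue x1 x2).mulVec (x2 - x1))
    (hbal : ∀ (x1 : Fin m → ℝ) (u : Fin m → ℝ),
      C * l1 (restr ((Hloc x1).mulVec u) K) ≤ l1 (restr ((Hloc x1).mulVec u) Kᶜ))
    (hcontr : ∀ x1 x2 : Fin m → ℝ,
      2 * (C + 1) / (C - 1) * (s1max (Htrue x1 x2 - Hloc x1) / s1min (Hloc x1)) ≤ β)
    (xs : ℕ → (Fin m → ℝ)) (d : ℕ → (Fin m → ℝ))
    (hiter : ∀ j : ℕ, xs (j + 1) = xs j + d j)
    (hmin : ∀ (j : ℕ) (Δ : Fin m → ℝ),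
      l1 ((y - h (xs j)) - (Hloc (xs j)).mulVec (d j)) ≤
        l1 ((y - h (xs j)) - (Hloc (xs j)).mulVec Δ)) :
    (∀ j : ℕ, l1 (x - xs (j + 1)) ≤ β * l1 (x - xs j)) ∧
      Filter.Tendsto (fun j => l1 (x - xs j)) Filter.atTop (nhds 0) := by
  have hβ0 : 0 ≤ β := (hcontr x x).trans' <| mul_nonneg
    (div_nonneg (by linarith) (by linarith)) (div_nonneg (s1max_nonneg _) (s1min_nonneg _))
  have step (j : ℕ) : l1 (x - xs (j + 1)) ≤ β * l1 (x - xs j) := by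
    have hres : y - h (xs j) = Hloc (xs j) *ᵥ (x - xs j)
        + (Htrue (xs j) x - Hloc (xs j)) *ᵥ (x - xs j) + e := by
      rw [hy, sub_mulVec, ← hmvt]
      abel
    have hnext : x - xs (j + 1) = (x - xs j) - d j := by
      rw [hiter]
      abel
    rw [hnext]
    exact (l1_sub_le_of_l1_minimizer hC (hbal (xs j)) heK hres (hmin j) (hfull (xs j))).trans
      (mul_le_mul_of_nonneg_right (hcontr _ _) (l1_nonneg _))
  exact ⟨step, tendsto_zero_of_le_mul_of_lt_one (fun _ => l1_nonneg _) hβ0 hβ step⟩
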